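/- arXiv:2603.02015 — 2 statements merged into one kernel-verified Lean document; each statement's English description precedes it below -/
import Mathlib

section
/- Let μ be a probability measure on a measurable space α and let κ and η be Markov kernels from α to a measurable space β such that the map x ↦ TV(κ(x), η(x)) is measurable. Then TV(μ ⊗ κ, μ ⊗ η) ≤ ∫ TV(κ(x), η(x)) dμ(x). -/
open MeasureTheory ProbabilityTheory

/-- Total variation distance between two measures:
`TV(P,Q) = sup { |P(A) - Q(A)| : A measurable }`. -/
noncomputable def tvDist {α : Type*} [MeasurableSpace α] (P Q : Measure α) : ℝ :=
  ⨆ A : {s : Set α // MeasurableSet s}, |(P A.1).toReal - (Q A.1).toReal|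

lemma abs_sub_toReal_le_one {α : Type*} [MeasurableSpace α] (P Q : Measure α)
    [IsProbabilityMeasure P] [IsProbabilityMeasure Q] (A : {s : Set α // MeasurableSet s}) :
    |(P A.1).toReal - (Q A.1).toReal| ≤ 1 := by
  have h1 : (P A.1).toReal ≤ 1 := by
    have := prob_le_one (μ := P) (s := A.1)
    simpa using ENNReal.toReal_le_of_le_ofReal one_pos.le (by simpa using this)
  have h2 : (Q A.1).toReal ≤ 1 := by
    have := prob_le_one (μ := Q) (s := A.1)
    simpa using ENNReal.toReal_le_of_le_ofReal one_pos.le (by simpa using this)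
  have h1' : 0 ≤ (P A.1).toReal := ENNReal.toReal_nonneg
  have h2' : 0 ≤ (Q A.1).toReal := ENNReal.toReal_nonneg
  rw [abs_sub_le_iff]
  constructor <;> linarith

lemma tvDist_bddAbove {α : Type*} [MeasurableSpace α] (P Q : Measure α)
    [IsProbabilityMeasure P] [IsProbabilityMeasure Q] :
    BddAbove (Set.range fun A : {s : Set α // MeasurableSet s} =>
      |(P A.1).toReal - (Q A.1).toReal|) := by
  refine ⟨1, ?_⟩
  rintro x ⟨A, rfl⟩
  exact abs_sub_toReal_le_one P Q A

lemma abs_sub_le_tvDist {α : Type*} [MeasurableSpace α] (P Q : Measure α)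
    [IsProbabilityMeasure P] [IsProbabilityMeasure Q] {s : Set α} (hs : MeasurableSet s) :
    |(P s).toReal - (Q s).toReal| ≤ tvDist P Q :=
  le_ciSup (tvDist_bddAbove P Q) ⟨s, hs⟩

lemma tvDist_le_one {α : Type*} [MeasurableSpace α] (P Q : Measure α)
    [IsProbabilityMeasure P] [IsProbabilityMeasure Q] : tvDist P Q ≤ 1 := by
  exact ciSup_le (abs_sub_toReal_le_one P Q)

lemma tvDist_nonneg {α : Type*} [MeasurableSpace α] (P Q : Measure α)
    [IsProbabilityMeasure P] [IsProbabilityMeasure Q] : 0 ≤ tvDist P Q := by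
  have := abs_sub_le_tvDist P Q MeasurableSet.empty
  have h := abs_nonneg ((P ∅).toReal - (Q ∅).toReal)
  linarith

/-- For a probability measure `μ` and Markov kernels `κ, η` from `α` to `β`
(with `x ↦ TV(κ x, η x)` measurable),
`TV(μ ⊗ κ, μ ⊗ η) ≤ ∫ TV(κ x, η x) dμ(x)`. -/
theorem tvDist_compProd_le_integral {α β : Type*} [MeasurableSpace α] [MeasurableSpace β]
    (μ : Measure α) [IsProbabilityMeasure μ]
    (κ η : Kernel α β) [IsMarkovKernel κ] [IsMarkovKernel η]
    (hmeas : Measurable fun x => tvDist (κ x) (η x)) :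
    tvDist (μ ⊗ₘ κ) (μ ⊗ₘ η) ≤ ∫ x, tvDist (κ x) (η x) ∂μ := by
  refine ciSup_le ?_
  rintro ⟨A, hA⟩
  have hκm : Measurable fun x => κ x (Prod.mk x ⁻¹' A) :=
    Kernel.measurable_kernel_prodMk_left hA
  have hηm : Measurable fun x => η x (Prod.mk x ⁻¹' A) :=
    Kernel.measurable_kernel_prodMk_left hA
  have h1 : ((μ ⊗ₘ κ) A).toReal = ∫ x, (κ x (Prod.mk x ⁻¹' A)).toReal ∂μ := by
    rw [Measure.compProd_apply hA, integral_toReal hκm.aemeasurable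
      (ae_of_all _ fun x => measure_lt_top _ _)]
  have h2 : ((μ ⊗ₘ η) A).toReal = ∫ x, (η x (Prod.mk x ⁻¹' A)).toReal ∂μ := by
    rw [Measure.compProd_apply hA, integral_toReal hηm.aemeasurable
      (ae_of_all _ fun x => measure_lt_top _ _)]
  have hfint : Integrable (fun x => (κ x (Prod.mk x ⁻¹' A)).toReal) μ := by
    refine Integrable.mono' (integrable_const 1) (hκm.ennreal_toReal).aestronglyMeasurable
      (ae_of_all _ fun x => ?_)
    rw [Real.norm_eq_abs, abs_of_nonneg ENNReal.toReal_nonneg]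
    exact ENNReal.toReal_le_of_le_ofReal one_pos.le (by simpa using prob_le_one)
  have hgint : Integrable (fun x => (η x (Prod.mk x ⁻¹' A)).toReal) μ := by
    refine Integrable.mono' (integrable_const 1) (hηm.ennreal_toReal).aestronglyMeasurable
      (ae_of_all _ fun x => ?_)
    rw [Real.norm_eq_abs, abs_of_nonneg ENNReal.toReal_nonneg]
    exact ENNReal.toReal_le_of_le_ofReal one_pos.le (by simpa using prob_le_one)
  have htvint : Integrable (fun x => tvDist (κ x) (η x)) μ := by
    refine Integrable.mono' (integrable_const 1) hmeas.aestronglyMeasurable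
      (ae_of_all _ fun x => ?_)
    rw [Real.norm_eq_abs, abs_of_nonneg (tvDist_nonneg _ _)]
    exact tvDist_le_one _ _
  rw [h1, h2, ← integral_sub hfint hgint]
  calc |∫ x, ((κ x (Prod.mk x ⁻¹' A)).toReal - (η x (Prod.mk x ⁻¹' A)).toReal) ∂μ|
      ≤ ∫ x, |(κ x (Prod.mk x ⁻¹' A)).toReal - (η x (Prod.mk x ⁻¹' A)).toReal| ∂μ :=
        by simpa [Real.norm_eq_abs] using
          norm_integral_le_integral_norm
            (fun x => (κ x (Prod.mk x ⁻¹' A)).toReal - (η x (Prod.mk x ⁻¹' A)).toReal)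
    _ ≤ ∫ x, tvDist (κ x) (η x) ∂μ := by
        refine integral_mono (hfint.sub hgint).abs htvint fun x => ?_
        exact abs_sub_le_tvDist _ _ (measurable_prodMk_left hA)
end

section
/- Let μ and ν be probability measures on a measurable space α and let κ be a Markov kernel from α to a measurable space β. Then TV(μ ⊗ κ, ν ⊗ κ) ≤ TV(μ, ν). -/
open MeasureTheory ProbabilityTheory

lemma tvDist_comm {α : Type*} [MeasurableSpace α] (P Q : Measure α) :
    tvDist P Q = tvDist Q P := by
  unfold tvDist
  congr 1
  ext A
  rw [abs_sub_comm]

lemma key_lintegral {α : Type*} [MeasurableSpace α] (μ ν : Measure α)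
    [IsProbabilityMeasure μ] [IsProbabilityMeasure ν]
    {f : α → ENNReal} (hf : Measurable f) (hf1 : ∀ x, f x ≤ 1)
    {s : Set α} (hs : MeasurableSet s)
    (h1 : ∀ t, MeasurableSet t → t ⊆ s → ν t ≤ μ t)
    (h2 : ∀ t, MeasurableSet t → t ⊆ sᶜ → μ t ≤ ν t) :
    ∫⁻ x, f x ∂μ + ν s ≤ ∫⁻ x, f x ∂ν + μ s := by
  have hμs : ν.restrict s ≤ μ.restrict s := by
    refine Measure.le_intro fun t ht _ => ?_
    rw [Measure.restrict_apply ht, Measure.restrict_apply ht]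
    exact h1 _ (ht.inter hs) Set.inter_subset_right
  have hνs : μ.restrict sᶜ ≤ ν.restrict sᶜ := by
    refine Measure.le_intro fun t ht _ => ?_
    rw [Measure.restrict_apply ht, Measure.restrict_apply ht]
    exact h2 _ (ht.inter hs.compl) Set.inter_subset_right
  have hsplit : ∀ ρ : Measure α, ∫⁻ x, f x ∂ρ = ∫⁻ x in s, f x ∂ρ + ∫⁻ x in sᶜ, f x ∂ρ := by
    intro ρ
    rw [← lintegral_add_measure, Measure.restrict_add_restrict_compl hs]
  have hc : ∫⁻ x in sᶜ, f x ∂μ ≤ ∫⁻ x in sᶜ, f x ∂ν := lintegral_mono' hνs le_rfl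
  have hkey : ∫⁻ x in s, f x ∂μ + ν s ≤ ∫⁻ x in s, f x ∂ν + μ s := by
    have hg : ∀ (ρ : Measure α), ∫⁻ x in s, f x ∂ρ + ∫⁻ x in s, (1 - f x) ∂ρ = ρ s := by
      intro ρ
      rw [← lintegral_add_left hf]
      have : ∀ x, f x + (1 - f x) = 1 := fun x => by
        rw [add_tsub_cancel_of_le (hf1 x)]
      simp_rw [this]
      simp
    have hmono : ∫⁻ x in s, (1 - f x) ∂ν ≤ ∫⁻ x in s, (1 - f x) ∂μ :=
      lintegral_mono' hμs le_rfl
    calc ∫⁻ x in s, f x ∂μ + ν s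
        = ∫⁻ x in s, f x ∂μ + (∫⁻ x in s, f x ∂ν + ∫⁻ x in s, (1 - f x) ∂ν) := by rw [hg ν]
      _ ≤ ∫⁻ x in s, f x ∂μ + (∫⁻ x in s, f x ∂ν + ∫⁻ x in s, (1 - f x) ∂μ) := by
          gcongr
      _ = ∫⁻ x in s, f x ∂ν + (∫⁻ x in s, f x ∂μ + ∫⁻ x in s, (1 - f x) ∂μ) := by ring
      _ = ∫⁻ x in s, f x ∂ν + μ s := by rw [hg μ]
  calc ∫⁻ x, f x ∂μ + ν s = (∫⁻ x in s, f x ∂μ + ν s) + ∫⁻ x in sᶜ, f x ∂μ := by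
        rw [hsplit μ]; ring
    _ ≤ (∫⁻ x in s, f x ∂ν + μ s) + ∫⁻ x in sᶜ, f x ∂ν := add_le_add hkey hc
    _ = ∫⁻ x, f x ∂ν + μ s := by rw [hsplit ν]; ring

lemma key_one_side {α β : Type*} [MeasurableSpace α] [MeasurableSpace β]
    (μ ν : Measure α) [IsProbabilityMeasure μ] [IsProbabilityMeasure ν]
    (κ : Kernel α β) [IsMarkovKernel κ] (A : Set (α × β)) (hA : MeasurableSet A) :
    ((μ ⊗ₘ κ) A).toReal - ((ν ⊗ₘ κ) A).toReal ≤ tvDist μ ν := by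
  obtain ⟨s, hs, h1, h2⟩ := hahn_decomposition (μ := μ) (ν := ν)
  set f : α → ENNReal := fun x => κ x (Prod.mk x ⁻¹' A) with hf_def
  have hf : Measurable f := ProbabilityTheory.Kernel.measurable_kernel_prodMk_left hA
  have hf1 : ∀ x, f x ≤ 1 := fun x => prob_le_one
  have hkey := key_lintegral μ ν hf hf1 hs h1 h2
  have hμA : (μ ⊗ₘ κ) A = ∫⁻ x, f x ∂μ := Measure.compProd_apply hA
  have hνA : (ν ⊗ₘ κ) A = ∫⁻ x, f x ∂ν := Measure.compProd_apply hA
  have hfin : ∀ (ρ : Measure α) [IsProbabilityMeasure ρ], ∫⁻ x, f x ∂ρ ≤ 1 := by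
    intro ρ _
    calc ∫⁻ x, f x ∂ρ ≤ ∫⁻ _, 1 ∂ρ := lintegral_mono hf1
      _ = 1 := by simp
  have hμfin : ∫⁻ x, f x ∂μ ≠ ⊤ := (lt_of_le_of_lt (hfin μ) ENNReal.one_lt_top).ne
  have hνfin : ∫⁻ x, f x ∂ν ≠ ⊤ := (lt_of_le_of_lt (hfin ν) ENNReal.one_lt_top).ne
  have hstep : ((μ ⊗ₘ κ) A).toReal - ((ν ⊗ₘ κ) A).toReal ≤ (μ s).toReal - (ν s).toReal := by
    rw [hμA, hνA]
    have := ENNReal.toReal_mono (by finiteness) hkey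
    rw [ENNReal.toReal_add hμfin (measure_ne_top ν s),
        ENNReal.toReal_add hνfin (measure_ne_top μ s)] at this
    linarith
  refine hstep.trans ?_
  have := le_ciSup (tvDist_bddAbove μ ν) (⟨s, hs⟩ : {t : Set α // MeasurableSet t})
  exact (le_abs_self _).trans this

/-- For probability measures `μ, ν` on `α` and a Markov kernel `κ` from
`α` to `β`, `TV(μ ⊗ κ, ν ⊗ κ) ≤ TV(μ, ν)`. -/
theorem tvDist_compProd_left_le {α β : Type*} [MeasurableSpace α] [MeasurableSpace β]
    (μ ν : Measure α) [IsProbabilityMeasure μ] [IsProbabilityMeasure ν]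
    (κ : Kernel α β) [IsMarkovKernel κ] :
    tvDist (μ ⊗ₘ κ) (ν ⊗ₘ κ) ≤ tvDist μ ν := by
  refine ciSup_le fun A => ?_
  rw [abs_sub_le_iff]
  constructor
  · exact key_one_side μ ν κ A.1 A.2
  · rw [tvDist_comm]
    exact key_one_side ν μ κ A.1 A.2
end
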